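/- Let C denote the middle-third Cantor set. If c ∈ C, d > 0, and 0 < |ρ| < 1 with log|ρ|/log 3 irrational, then there exists n ∈ ℕ such that c + ρ^{2n} d ∉ C. Equivalently: if c + ρ^{2n} d ∈ C for all n ∈ ℕ, then log|ρ|/log 3 ∈ ℚ. -/

import Mathlib

/-- The middle-third Cantor set. -/
def cantorC : Set ℝ :=
  {x | ∃ ε : ℕ → ℝ, (∀ n, ε n = 0 ∨ ε n = 2) ∧ x = ∑' n : ℕ, ε n / 3 ^ (n + 1)}

open Real

namespace CantorAux3

lemma summable_digits (e : ℕ → ℝ) (he : ∀ n, |e n| ≤ 2) :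
    Summable (fun n => e n / 3 ^ (n + 1)) := by
  apply Summable.of_norm_bounded (g := fun n => (2/3) * (1/3 : ℝ) ^ n)
  · exact (summable_geometric_of_lt_one (by norm_num) (by norm_num)).mul_left _
  · intro n
    have h3 : (0:ℝ) < 3 ^ (n+1) := by positivity
    rw [Real.norm_eq_abs, abs_div, abs_of_pos h3]
    rw [div_le_iff₀ h3]
    have : (2/3 : ℝ) * (1/3)^n * 3^(n+1) = 2 := by
      rw [one_div, inv_pow, pow_succ]; field_simp
    rw [this]
    exact he n

lemma tail_bound (e : ℕ → ℝ) (he : ∀ n, |e n| ≤ 2) (k : ℕ) :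
    |∑' n : ℕ, e (n + (k+1)) / 3 ^ ((n + (k+1)) + 1)| ≤ 1 / 3 ^ (k+1) := by
  have hsum : Summable (fun n => e (n + (k+1)) / 3 ^ ((n + (k+1)) + 1)) :=
    (summable_digits e he).comp_injective (add_left_injective (k+1))
  have habs : Summable (fun n => ‖e (n + (k+1)) / 3 ^ ((n + (k+1)) + 1)‖) := by
    apply Summable.of_nonneg_of_le (fun n => norm_nonneg _) (fun n => ?_)
      (((summable_geometric_of_lt_one (by norm_num : (0:ℝ) ≤ 1/3) (by norm_num)).mul_left
        (2 / 3 ^ (k+2))))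
    have h3 : (0:ℝ) < 3 ^ ((n + (k+1)) + 1) := by positivity
    rw [Real.norm_eq_abs, abs_div, abs_of_pos h3, div_le_iff₀ h3]
    have hE : 2 / 3^(k+2) * (1/3:ℝ)^n * 3 ^ ((n + (k+1)) + 1) = 2 := by
      rw [one_div, inv_pow]
      rw [show (n + (k+1)) + 1 = (k+2) + n by ring, pow_add]
      field_simp; ring
    rw [hE]; exact he _
  calc |∑' n : ℕ, e (n + (k+1)) / 3 ^ ((n + (k+1)) + 1)|
      ≤ ∑' n : ℕ, ‖e (n + (k+1)) / 3 ^ ((n + (k+1)) + 1)‖ := norm_tsum_le_tsum_norm habs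
    _ ≤ ∑' n : ℕ, 2 / 3^(k+2) * (1/3:ℝ)^n := by
        apply Summable.tsum_le_tsum _ habs
          ((summable_geometric_of_lt_one (by norm_num) (by norm_num)).mul_left _)
        intro n
        have h3 : (0:ℝ) < 3 ^ ((n + (k+1)) + 1) := by positivity
        rw [Real.norm_eq_abs, abs_div, abs_of_pos h3, div_le_iff₀ h3]
        have hE : 2 / 3^(k+2) * (1/3:ℝ)^n * 3 ^ ((n + (k+1)) + 1) = 2 := by
          rw [one_div, inv_pow]
          rw [show (n + (k+1)) + 1 = (k+2) + n by ring, pow_add]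
          field_simp; ring
        rw [hE]; exact he _
    _ = 1 / 3 ^ (k+1) := by
        rw [tsum_mul_left, tsum_geometric_of_lt_one (by norm_num) (by norm_num)]
        rw [pow_succ]
        field_simp
        ring

lemma split_sum (e : ℕ → ℝ) (he : ∀ n, |e n| ≤ 2) (j : ℕ) (hz : ∀ i, i < j → e i = 0) :
    (∑' n : ℕ, e n / 3 ^ (n+1)) - e j / 3 ^ (j+1)
      = ∑' n : ℕ, e (n + (j+1)) / 3 ^ ((n + (j+1)) + 1) := by
  have h := Summable.sum_add_tsum_nat_add (f := fun n => e n / 3 ^ (n+1)) (j+1) (summable_digits e he)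
  have hfin : ∑ i ∈ Finset.range (j+1), e i / 3 ^ (i+1) = e j / 3 ^ (j+1) := by
    rw [Finset.sum_eq_single_of_mem j (Finset.self_mem_range_succ j)]
    intro i hi hne
    rw [hz i (lt_of_le_of_ne (Nat.lt_succ_iff.mp (Finset.mem_range.mp hi)) hne)]
    simp
  rw [hfin] at h
  linarith [h]

lemma first_digit (e : ℕ → ℝ) (he : ∀ n, e n = -2 ∨ e n = 0 ∨ e n = 2) (k : ℕ)
    (h1 : 1 < 3 ^ (k+1) * ∑' n : ℕ, e n / 3 ^ (n+1))
    (h3 : 3 ^ (k+1) * (∑' n : ℕ, e n / 3 ^ (n+1)) < 3) :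
    (∀ j, j < k → e j = 0) ∧ e k = 2 := by
  have habs : ∀ n, |e n| ≤ 2 := by
    intro n; rcases he n with h | h | h <;> rw [h] <;> norm_num
  set δ := ∑' n : ℕ, e n / 3 ^ (n+1) with hδ
  have hp : (0:ℝ) < 3 ^ (k+1) := by positivity
  have hδpos : 0 < δ := by nlinarith
  have hzer : ∀ j, j < k → e j = 0 := by
    intro j
    induction j using Nat.strong_induction_on with
    | _ j IH =>
      intro hj
      have hz : ∀ i, i < j → e i = 0 := fun i hi => IH i hi (hi.trans hj)
      have hsp := split_sum e habs j hz
      have htb := tail_bound e habs j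
      have hjp : (0:ℝ) < 3 ^ (j+1) := by positivity
      rcases he j with h | h | h
      · -- e j = -2 : δ ≤ -1/3^(j+1) < 0
        exfalso
        rw [h] at hsp
        have : δ ≤ -2 / 3^(j+1) + 1/3^(j+1) := by
          have := abs_le.mp htb
          linarith [this.2]
        have h0 : (0:ℝ) < 1/3^(j+1) := by positivity
        have h0' : (-2:ℝ)/3^(j+1) + 1/3^(j+1) = -(1/3^(j+1)) := by ring
        linarith
      · exact h
      · -- e j = 2 : δ ≥ 1/3^(j+1), so 3^(k+1) δ ≥ 3^(k-j) ≥ 3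
        exfalso
        rw [h] at hsp
        have hge : 1 / 3^(j+1) ≤ δ := by
          have := (abs_le.mp htb).1
          have h2 : (2:ℝ) / 3^(j+1) - 1/3^(j+1) = 1/3^(j+1) := by ring
          linarith
        have hpow : (3:ℝ) ^ (k+1) = 3 ^ (j+1) * 3 ^ (k - j) := by
          rw [← pow_add]
          congr 1
          omega
        have h3le : (3:ℝ) ≤ 3 ^ (k - j) := by
          calc (3:ℝ) = 3^1 := (pow_one 3).symm
          _ ≤ 3 ^ (k-j) := pow_le_pow_right₀ (by norm_num) (by omega)
        have : (3:ℝ) ≤ 3 ^ (k+1) * δ := by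
          calc (3:ℝ) ≤ 3 ^ (k-j) := h3le
          _ = 3 ^ (j+1) * (1/3^(j+1)) * 3^(k-j) := by field_simp
          _ ≤ 3 ^ (j+1) * δ * 3^(k-j) := by
              apply mul_le_mul_of_nonneg_right _ (by positivity)
              exact mul_le_mul_of_nonneg_left hge (le_of_lt hjp)
          _ = 3 ^ (k+1) * δ := by rw [hpow]; ring
        linarith
  refine ⟨hzer, ?_⟩
  have hsp := split_sum e habs k hzer
  have htb := tail_bound e habs k
  rcases he k with h | h | h
  · exfalso
    rw [h] at hsp
    have : δ ≤ -2 / 3^(k+1) + 1/3^(k+1) := by linarith [(abs_le.mp htb).2]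
    have h0 : (0:ℝ) < 1/3^(k+1) := by positivity
    have h0' : (-2:ℝ)/3^(k+1) + 1/3^(k+1) = -(1/3^(k+1)) := by ring
    linarith
  · exfalso
    rw [h] at hsp
    have h00 : δ ≤ 0 / 3^(k+1) + 1/3^(k+1) := by linarith [(abs_le.mp htb).2]
    have : 3 ^ (k+1) * δ ≤ 1 := by
      have h1' : δ ≤ 1/3^(k+1) := by
        have hz0 : (0:ℝ) / 3^(k+1) + 1/3^(k+1) = 1/3^(k+1) := by ring
        linarith
      calc 3 ^ (k+1) * δ ≤ 3^(k+1) * (1/3^(k+1)) := by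
            exact mul_le_mul_of_nonneg_left h1' (le_of_lt hp)
        _ = 1 := by field_simp
    linarith
  · exact h

lemma diff_digits (a b : ℕ → ℝ) (ha : ∀ n, a n = 0 ∨ a n = 2) (hb : ∀ n, b n = 0 ∨ b n = 2)
    (δ : ℝ) (heq : (∑' n : ℕ, a n / 3 ^ (n+1)) + δ = ∑' n : ℕ, b n / 3 ^ (n+1)) :
    δ = ∑' n : ℕ, (b n - a n) / 3 ^ (n+1) := by
  have haa : ∀ n, |a n| ≤ 2 := by intro n; rcases ha n with h|h <;> rw [h] <;> norm_num
  have hbb : ∀ n, |b n| ≤ 2 := by intro n; rcases hb n with h|h <;> rw [h] <;> norm_num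
  have h := Summable.tsum_sub (summable_digits b hbb) (summable_digits a haa)
  have heq2 : ∀ n, (b n - a n) / 3 ^ (n+1) = b n / 3^(n+1) - a n / 3^(n+1) := by
    intro n; ring
  rw [tsum_congr heq2, h]
  linarith

lemma he_mem (a b : ℕ → ℝ) (ha : ∀ n, a n = 0 ∨ a n = 2) (hb : ∀ n, b n = 0 ∨ b n = 2) :
    ∀ n, b n - a n = -2 ∨ b n - a n = 0 ∨ b n - a n = 2 := by
  intro n; rcases ha n with h|h <;> rcases hb n with h'|h' <;> rw [h, h'] <;> norm_num

lemma keyA (a b : ℕ → ℝ) (ha : ∀ n, a n = 0 ∨ a n = 2) (hb : ∀ n, b n = 0 ∨ b n = 2)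
    (δ : ℝ) (heq : (∑' n : ℕ, a n / 3 ^ (n+1)) + δ = ∑' n : ℕ, b n / 3 ^ (n+1))
    (k : ℕ) (h1 : 1 < 3 ^ (k+1) * δ) (h3 : 3 ^ (k+1) * δ < 3) : a k = 0 := by
  have hδ := diff_digits a b ha hb δ heq
  rw [hδ] at h1 h3
  have h : b k - a k = 2 := (first_digit _ (he_mem a b ha hb) k h1 h3).2
  rcases ha k with h'|h' <;> rcases hb k with h''|h''
  · exact h'
  · exact h'
  · exfalso; rw [h', h''] at h; norm_num at h
  · exfalso; rw [h', h''] at h; norm_num at h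

lemma keyB (a b : ℕ → ℝ) (ha : ∀ n, a n = 0 ∨ a n = 2) (hb : ∀ n, b n = 0 ∨ b n = 2)
    (δ : ℝ) (heq : (∑' n : ℕ, a n / 3 ^ (n+1)) + δ = ∑' n : ℕ, b n / 3 ^ (n+1))
    (k k' : ℕ) (h1 : 1 < 3 ^ (k+1) * δ) (h2 : 3 ^ (k+1) * δ < 2)
    (h1' : 1 < 3 ^ (k'+1) * (2 / 3 ^ (k+1) - δ))
    (h3' : 3 ^ (k'+1) * (2 / 3 ^ (k+1) - δ) < 3) : a k' = 2 := by
  have hδ := diff_digits a b ha hb δ heq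
  set e : ℕ → ℝ := fun n => b n - a n with hee
  have hem := he_mem a b ha hb
  have habs : ∀ n, |e n| ≤ 2 := by
    intro n
    have hrfl : e n = b n - a n := rfl
    rcases hem n with h|h|h <;> rw [hrfl, h] <;> norm_num
  have h3 : 3 ^ (k+1) * δ < 3 := by linarith
  rw [hδ] at h1 h3
  obtain ⟨hz, hk⟩ := first_digit e hem k h1 h3
  -- second sequence
  set e' : ℕ → ℝ := fun n => if k < n then -(e n) else 0 with he'
  have hem' : ∀ n, e' n = -2 ∨ e' n = 0 ∨ e' n = 2 := by
    intro n
    simp only [he']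
    by_cases h : k < n
    · simp only [if_pos h]
      have hrfl : e n = b n - a n := rfl
      rcases hem n with h'|h'|h' <;> rw [hrfl, h'] <;> norm_num
    · simp only [if_neg h]; norm_num
  -- tsum of e' equals 2/3^(k+1) - δ
  have hsum : Summable (fun n => e n / 3 ^ (n+1)) := summable_digits e habs
  have habs' : ∀ n, |e' n| ≤ 2 := by
    intro n; rcases hem' n with h|h|h <;> rw [h] <;> norm_num
  have hsum' : Summable (fun n => e' n / 3 ^ (n+1)) := summable_digits e' habs'
  have hsplit := Summable.sum_add_tsum_nat_add (f := fun n => e n / 3 ^ (n+1)) (k+1) hsum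
  have hsplit' := Summable.sum_add_tsum_nat_add (f := fun n => e' n / 3 ^ (n+1)) (k+1) hsum'
  have hfin : ∑ i ∈ Finset.range (k+1), e i / 3 ^ (i+1) = 2 / 3 ^ (k+1) := by
    rw [Finset.sum_eq_single_of_mem k (Finset.self_mem_range_succ k)]
    · rw [hk]
    · intro i hi hne
      rw [hz i (lt_of_le_of_ne (Nat.lt_succ_iff.mp (Finset.mem_range.mp hi)) hne)]
      simp
  have hfin' : ∑ i ∈ Finset.range (k+1), e' i / 3 ^ (i+1) = 0 := by
    apply Finset.sum_eq_zero
    intro i hi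
    have : ¬ (k < i) := by
      have := Finset.mem_range.mp hi; omega
    simp only [he', if_neg this]
    simp
  have htail : ∀ n : ℕ, e' (n + (k+1)) / 3 ^ ((n + (k+1))+1) = -(e (n + (k+1)) / 3 ^ ((n + (k+1))+1)) := by
    intro n
    have : k < n + (k+1) := by omega
    simp only [he', if_pos this]
    ring
  have hδ' : (∑' n : ℕ, e' n / 3 ^ (n+1)) = 2 / 3 ^ (k+1) - δ := by
    rw [← hsplit', hfin']
    rw [tsum_congr htail, tsum_neg]
    rw [hδ, ← hsplit, hfin]
    ring
  rw [← hδ'] at h1' h3'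
  obtain ⟨hz', hk'⟩ := first_digit e' hem' k' h1' h3'
  have hkk' : k < k' := by
    by_contra hcon
    simp only [he'] at hk'
    rw [if_neg hcon] at hk'
    norm_num at hk'
  have hek' : e k' = -2 := by
    simp only [he'] at hk'
    rw [if_pos hkk'] at hk'
    linarith
  have hba : b k' - a k' = -2 := hek'
  rcases ha k' with h'|h' <;> rcases hb k' with h''|h'' <;> rw [h', h''] at hba
  · norm_num at hba
  · norm_num at hba
  · exact h'
  · norm_num at hba

lemma fract_ne_zero_of_irrational {x : ℝ} (hx : Irrational x) : Int.fract x ≠ 0 := by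
  intro h
  have : x = (⌊x⌋ : ℝ) := by
    have := Int.self_sub_floor x
    rw [h] at this
    linarith
  exact (hx.ne_int ⌊x⌋) this

lemma small_step (A : ℝ) (hA : Irrational A) {ε : ℝ} (hε : 0 < ε) :
    ∃ q : ℕ, 1 ≤ q ∧ ((Int.fract (q * A) < ε ∧ 0 < Int.fract (q * A))
      ∨ 1 - ε < Int.fract (q * A)) := by
  obtain ⟨m, hm⟩ := exists_nat_one_div_lt hε
  have hmpos : 0 < m + 1 := Nat.succ_pos m
  obtain ⟨j, k, hk0, hkm, hjk⟩ := Real.exists_int_int_abs_mul_sub_le A hmpos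
  set q : ℕ := k.toNat with hq
  have hqk : (q : ℝ) = (k : ℝ) := by
    rw [hq]; norm_cast; omega
  have hq1 : 1 ≤ q := by omega
  have hirr : Irrational ((q:ℝ) * A) := hA.natCast_mul (by omega)
  have hne : (q:ℝ) * A - j ≠ 0 := by
    intro h0
    exact (hirr.ne_int j) (by linarith)
  have hbound : |(q:ℝ) * A - j| ≤ 1/(m+1+1) := by
    rw [hqk]
    convert hjk using 2
    push_cast; ring
  have hlt : 1/((m:ℝ)+1+1) < ε := by
    have h1 : (1:ℝ)/(m+1+1) ≤ 1/(m+1) := by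
      apply div_le_div_of_nonneg_left (by norm_num) (by positivity) (by linarith)
    calc (1:ℝ)/(m+1+1) ≤ 1/(m+1) := h1
      _ < ε := hm
  have habs := abs_le.mp hbound
  have hlt1 : 1/((m:ℝ)+1+1) < 1 := by
    rw [div_lt_one (by positivity)]
    have : (0:ℝ) ≤ m := Nat.cast_nonneg m
    linarith
  refine ⟨q, hq1, ?_⟩
  rcases lt_or_gt_of_ne hne with hneg | hpos
  · -- q*A - j ∈ (-ε', 0): fract = q*A - j + 1 > 1 - ε
    right
    have hval : Int.fract ((q:ℝ) * A) = (q:ℝ)*A - j + 1 := by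
      have h0 : Int.fract ((q:ℝ) * A) = Int.fract ((q:ℝ)*A - j) := (Int.fract_sub_intCast _ _).symm
      have hx1 : Int.fract ((q:ℝ)*A - j) = Int.fract ((q:ℝ)*A - j + 1) := by
        rw [show ((q:ℝ)*A - (j:ℝ) + 1) = ((q:ℝ)*A - (j:ℝ)) + ((1:ℤ):ℝ) by push_cast; ring,
          Int.fract_add_intCast]
      rw [h0, hx1, Int.fract_eq_self.mpr ⟨by linarith [habs.1], by linarith⟩]
    rw [hval]
    linarith [habs.1, hlt]
  · left
    have hval : Int.fract ((q:ℝ) * A) = (q:ℝ)*A - j := by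
      have : Int.fract ((q:ℝ) * A) = Int.fract ((q:ℝ)*A - j) := (Int.fract_sub_intCast _ _).symm
      rw [this, Int.fract_eq_self.mpr ⟨le_of_lt hpos, by linarith [habs.2]⟩]
    constructor
    · rw [hval]; linarith [habs.2]
    · rw [hval]; exact hpos

lemma fract_orbit_ident (A B : ℝ) (N q j : ℕ) :
    Int.fract ((((N + j*q : ℕ)) : ℝ) * A - B)
      = Int.fract (Int.fract ((N:ℝ)*A - B) + (j:ℝ) * Int.fract ((q:ℝ)*A)) := by
  have h1 : (((N + j*q : ℕ)) : ℝ) * A - B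
      = (Int.fract ((N:ℝ)*A - B) + (j:ℝ) * Int.fract ((q:ℝ)*A))
        + ((⌊(N:ℝ)*A - B⌋ + (j:ℤ) * ⌊(q:ℝ)*A⌋ : ℤ) : ℝ) := by
    have hw : Int.fract ((N:ℝ)*A - B) = (N:ℝ)*A - B - ⌊(N:ℝ)*A - B⌋ := rfl
    have hs : Int.fract ((q:ℝ)*A) = (q:ℝ)*A - ⌊(q:ℝ)*A⌋ := rfl
    rw [hw, hs]
    push_cast
    ring
  rw [h1, Int.fract_add_intCast]

lemma walk_up (w s t : ℝ) (hs0 : 0 < s) (hwt : w ≤ t) :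
    ∃ J : ℕ, 1 ≤ J ∧ t < w + (J:ℝ)*s ∧ w + (J:ℝ)*s ≤ t + s := by
  have hex : ∃ j : ℕ, t < w + (j:ℝ)*s := by
    obtain ⟨j, hj⟩ := exists_nat_gt ((t - w)/s)
    exact ⟨j, by rw [div_lt_iff₀ hs0] at hj; linarith⟩
  have hJ0 : Nat.find hex ≠ 0 := by
    intro h0
    have := Nat.find_spec hex
    rw [h0] at this
    norm_num at this
    linarith
  obtain ⟨J', hJ'⟩ := Nat.exists_eq_succ_of_ne_zero hJ0
  have hJprop : t < w + ((J':ℝ)+1)*s := by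
    have := Nat.find_spec hex
    rw [hJ'] at this
    push_cast at this
    linarith
  have hpred : w + (J':ℝ)*s ≤ t := by
    have := Nat.find_min hex (by omega : J' < Nat.find hex)
    push_neg at this
    exact this
  refine ⟨J' + 1, by omega, ?_, ?_⟩
  · push_cast; linarith
  · push_cast; linarith

lemma fract_dense (A B : ℝ) (hA : Irrational A) {l h : ℝ} (hl : 0 ≤ l) (hh : h ≤ 1)
    (hlh : l < h) (N : ℕ) :
    ∃ n : ℕ, N ≤ n ∧ l < Int.fract ((n:ℝ) * A - B) ∧ Int.fract ((n:ℝ) * A - B) < h := by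
  obtain ⟨q, hq1, hcase⟩ := small_step A hA (show (0:ℝ) < h - l by linarith)
  have hw0 : (0:ℝ) ≤ Int.fract ((N:ℝ)*A - B) := Int.fract_nonneg _
  have hw1 : Int.fract ((N:ℝ)*A - B) < 1 := Int.fract_lt_one _
  have hs1 : Int.fract ((q:ℝ)*A) < 1 := Int.fract_lt_one _
  have hs0' : (0:ℝ) ≤ Int.fract ((q:ℝ)*A) := Int.fract_nonneg _
  set w : ℝ := Int.fract ((N:ℝ)*A - B)
  set s : ℝ := Int.fract ((q:ℝ)*A)
  rcases hcase with ⟨hsmall, hs0⟩ | hbig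
  · -- ascending walk with step s ∈ (0, h-l)
    by_cases hwl : w ≤ l
    · obtain ⟨J, hJ1, hJa, hJb⟩ := walk_up w s l hs0 hwl
      refine ⟨N + J*q, by omega, ?_, ?_⟩ <;>
        rw [fract_orbit_ident A B N q J,
          Int.fract_eq_self.mpr ⟨by linarith, by linarith⟩]
      · linarith
      · linarith
    · push_neg at hwl
      obtain ⟨J, hJ1, hJa, hJb⟩ := walk_up w s (1+l) hs0 (by linarith)
      have hfr : Int.fract (w + (J:ℝ)*s) = w + (J:ℝ)*s - 1 := by
        rw [show w + (J:ℝ)*s = (w + (J:ℝ)*s - 1) + ((1:ℤ):ℝ) by push_cast; ring,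
          Int.fract_add_intCast, Int.fract_eq_self.mpr ⟨by linarith, by linarith⟩]
        push_cast; ring
      refine ⟨N + J*q, by omega, ?_, ?_⟩ <;>
        rw [fract_orbit_ident A B N q J, hfr]
      · linarith
      · linarith
  · -- descending walk with step 1-s
    have hs'0 : 0 < 1 - s := by linarith
    have hs'sm : 1 - s < h - l := by linarith
    have hkey : ∀ J : ℕ, Int.fract (w + (J:ℝ)*s) = Int.fract (w - (J:ℝ)*(1-s)) := by
      intro J
      rw [show w + (J:ℝ)*s = (w - (J:ℝ)*(1-s)) + ((J:ℤ):ℝ) by push_cast; ring,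
        Int.fract_add_intCast]
    by_cases hwh : w < h
    · obtain ⟨J, hJ1, hJa, hJb⟩ := walk_up (-w) (1-s) (-(h-1)) hs'0 (by linarith)
      -- h - 1 - (1-s) ≤ w - J*(1-s) < h - 1
      have hv1 : w - (J:ℝ)*(1-s) < h - 1 := by linarith
      have hv2 : h - 1 - (1-s) ≤ w - (J:ℝ)*(1-s) := by linarith
      have hfr : Int.fract (w - (J:ℝ)*(1-s)) = w - (J:ℝ)*(1-s) + 1 := by
        rw [show w - (J:ℝ)*(1-s) = (w - (J:ℝ)*(1-s) + 1) - ((1:ℤ):ℝ) by push_cast; ring,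
          Int.fract_sub_intCast, Int.fract_eq_self.mpr ⟨by linarith, by linarith⟩]
        push_cast; ring
      refine ⟨N + J*q, by omega, ?_, ?_⟩ <;>
        rw [fract_orbit_ident A B N q J, hkey J, hfr]
      · linarith
      · linarith
    · push_neg at hwh
      obtain ⟨J, hJ1, hJa, hJb⟩ := walk_up (-w) (1-s) (-h) hs'0 (by linarith)
      have hv1 : w - (J:ℝ)*(1-s) < h := by linarith
      have hv2 : h - (1-s) ≤ w - (J:ℝ)*(1-s) := by linarith
      have hfr : Int.fract (w - (J:ℝ)*(1-s)) = w - (J:ℝ)*(1-s) :=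
        Int.fract_eq_self.mpr ⟨by linarith, by linarith⟩
      refine ⟨N + J*q, by omega, ?_, ?_⟩ <;>
        rw [fract_orbit_ident A B N q J, hkey J, hfr]
      · linarith
      · linarith

noncomputable def lam3 : ℝ := Real.log 3
noncomputable def aa (g : ℕ) : ℝ := Real.log (2 - 3/3^g) / lam3

lemma hlam3 : 0 < lam3 := Real.log_pos (by norm_num)

lemma arg_ge (g : ℕ) (hg : 1 ≤ g) : (1:ℝ) ≤ 2 - 3/3^g ∧ (0:ℝ) < 3/3^g := by
  constructor
  · have h3 : (3:ℝ) ≤ 3^g := by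
      calc (3:ℝ) = 3^1 := (pow_one 3).symm
      _ ≤ 3^g := pow_le_pow_right₀ (by norm_num) hg
    have : (3:ℝ)/3^g ≤ 1 := by
      rw [div_le_one (by positivity)]; exact h3
    linarith
  · positivity

lemma aa_nonneg (g : ℕ) (hg : 1 ≤ g) : 0 ≤ aa g := by
  have h := arg_ge g hg
  exact div_nonneg (Real.log_nonneg h.1) hlam3.le

lemma aa_lt_one (g : ℕ) (hg : 1 ≤ g) : aa g < 1 := by
  have h := arg_ge g hg
  rw [aa, div_lt_one hlam3]
  apply Real.log_lt_log (by linarith)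
  linarith

lemma exp_lam3_aa (g : ℕ) (hg : 1 ≤ g) : Real.exp (lam3 * aa g) = 2 - 3/3^g := by
  have h := arg_ge g hg
  rw [aa, mul_div_cancel₀ _ (ne_of_gt hlam3)]
  exact Real.exp_log (by linarith)

lemma aa_mono (g : ℕ) (hg : 1 ≤ g) : aa g < aa (g+1) := by
  have h := arg_ge g hg
  have h' := arg_ge (g+1) (by omega)
  rw [aa, aa, div_lt_div_iff_of_pos_right hlam3]
  apply Real.log_lt_log (by linarith)
  have : (3:ℝ)/3^(g+1) < 3/3^g := by
    apply div_lt_div_of_pos_left (by norm_num) (by positivity)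
    rw [pow_succ]
    nlinarith [pow_pos (show (0:ℝ) < 3 by norm_num) g]
  linarith

lemma exp_one : Real.exp lam3 = 3 := Real.exp_log (by norm_num)

/-- choose p ∈ {1,2} avoiding the degenerate coincidence -/
lemma choose_p {A : ℝ} (hA0 : 0 < A) (hAirr : Irrational A) :
    ∃ p : ℕ, 1 ≤ p ∧
      Int.fract ((p:ℝ)*A) ≠ aa ((⌊(p:ℝ)*A⌋).toNat + 1) := by
  by_contra hcon
  push_neg at hcon
  have h1 := hcon 1 (le_refl 1)
  have h2 := hcon 2 (by norm_num)
  -- preliminaries for u = A and u = 2A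
  have key : ∀ p : ℕ, 1 ≤ p → Int.fract ((p:ℝ)*A) = aa ((⌊(p:ℝ)*A⌋).toNat + 1) →
      ∃ G : ℕ, 1 ≤ G ∧ (p:ℝ)*A = G + aa (G+1) := by
    intro p hp hfr
    have hpA0 : 0 < (p:ℝ)*A := by
      apply mul_pos _ hA0
      exact_mod_cast hp
    have hirrp : Irrational ((p:ℝ)*A) := hAirr.natCast_mul (by omega)
    have hfl0 : (0:ℤ) ≤ ⌊(p:ℝ)*A⌋ := Int.floor_nonneg.mpr hpA0.le
    set G : ℕ := (⌊(p:ℝ)*A⌋).toNat with hG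
    have hGR : (G:ℝ) = (⌊(p:ℝ)*A⌋ : ℝ) := by
      rw [hG]; exact_mod_cast Int.toNat_of_nonneg hfl0
    have hsplit : (p:ℝ)*A = G + Int.fract ((p:ℝ)*A) := by
      rw [hGR]
      have := Int.self_sub_floor ((p:ℝ)*A)
      linarith
    have hfrpos : 0 < Int.fract ((p:ℝ)*A) := by
      rcases lt_or_eq_of_le (Int.fract_nonneg ((p:ℝ)*A)) with h | h
      · exact h
      · exfalso
        apply fract_ne_zero_of_irrational hirrp h.symm
    have hG1 : 1 ≤ G := by
      by_contra hG0
      have : G = 0 := by omega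
      rw [this] at hfr
      have : aa 1 = 0 := by
        rw [aa]
        norm_num
      rw [this] at hfr
      linarith
    exact ⟨G, hG1, by rw [← hfr]; exact hsplit⟩
  obtain ⟨G1, hG11, hu1⟩ := key 1 (le_refl 1) h1
  obtain ⟨G2, hG21, hu2⟩ := key 2 (by norm_num) h2
  rw [Nat.cast_one, one_mul] at hu1
  -- 2*A = 2*G1 + 2*aa(G1+1) and = G2 + aa(G2+1)
  have heq : 2*(aa (G1+1)) - aa (G2+1) = (G2:ℝ) - 2*(G1:ℝ) := by
    have h2A : (2:ℝ)*A = G2 + aa (G2+1) := by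
      rw [← hu2]; push_cast; ring
    nlinarith [hu1, h2A]
  have hb1 : 0 ≤ aa (G1+1) := aa_nonneg _ (by omega)
  have hb2 : 0 ≤ aa (G2+1) := aa_nonneg _ (by omega)
  have hb1' : aa (G1+1) < 1 := aa_lt_one _ (by omega)
  have hb2' : aa (G2+1) < 1 := aa_lt_one _ (by omega)
  -- integer m := G2 - 2 G1 ∈ (-1, 2)
  have hmlow : -1 < (G2:ℝ) - 2*(G1:ℝ) := by linarith
  have hmhigh : (G2:ℝ) - 2*(G1:ℝ) < 2 := by linarith
  have hm01 : (G2:ℤ) - 2*(G1:ℤ) = 0 ∨ (G2:ℤ) - 2*(G1:ℤ) = 1 := by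
    have l1 : (-1:ℝ) < ((G2:ℤ) - 2*(G1:ℤ) : ℤ) := by push_cast; linarith
    have l2 : (((G2:ℤ) - 2*(G1:ℤ) : ℤ):ℝ) < 2 := by push_cast; linarith
    have l1' : (-1:ℤ) < (G2:ℤ) - 2*(G1:ℤ) := by exact_mod_cast l1
    have l2' : (G2:ℤ) - 2*(G1:ℤ) < 2 := by exact_mod_cast l2
    omega
  -- exponentials
  have hx := exp_lam3_aa (G1+1) (by omega)
  have hy := exp_lam3_aa (G2+1) (by omega)
  set x : ℝ := 3/3^(G1+1) with hxd
  set y : ℝ := 3/3^(G2+1) with hyd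
  have hxb : x ≤ 1/3 := by
    rw [hxd]
    rw [div_le_div_iff₀ (by positivity) (by norm_num)]
    calc (3:ℝ)*3 = 3^2 := by norm_num
    _ ≤ 3^(G1+1) := pow_le_pow_right₀ (by norm_num) (by omega)
    _ = 1 * 3^(G1+1) := by ring
  have hyb : y ≤ 1/3 := by
    rw [hyd]
    rw [div_le_div_iff₀ (by positivity) (by norm_num)]
    calc (3:ℝ)*3 = 3^2 := by norm_num
    _ ≤ 3^(G2+1) := pow_le_pow_right₀ (by norm_num) (by omega)
    _ = 1 * 3^(G2+1) := by ring
  have hx0 : 0 < x := by rw [hxd]; positivity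
  have hy0 : 0 < y := by rw [hyd]; positivity
  have hsq : (2 - x)^2 = Real.exp (lam3 * (2 * aa (G1+1))) := by
    rw [show lam3 * (2 * aa (G1+1)) = (lam3 * aa (G1+1)) + (lam3 * aa (G1+1)) by ring,
      Real.exp_add, hx]
    ring
  rcases hm01 with hm | hm
  · -- 2 a1 = a2, (2-x)^2 = 2 - y, but (2-x)^2 ≥ (5/3)^2 > 2 > 2-y
    have hcast : (G2:ℝ) - 2*(G1:ℝ) = 0 := by exact_mod_cast hm
    have haa : 2 * aa (G1+1) = aa (G2+1) := by linarith
    rw [haa, hy] at hsq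
    nlinarith [hxb, hy0]
  · have hcast : (G2:ℝ) - 2*(G1:ℝ) = 1 := by exact_mod_cast hm
    have haa : 2 * aa (G1+1) = 1 + aa (G2+1) := by linarith
    rw [haa] at hsq
    rw [show lam3 * (1 + aa (G2+1)) = lam3 + lam3 * aa (G2+1) by ring, Real.exp_add,
      exp_one, hy] at hsq
    nlinarith [hxb, hyb, hx0]

lemma findg {u : ℝ} (hu : 0 < u) (hirru : Irrational u)
    (hnb : Int.fract u ≠ aa ((⌊u⌋).toNat + 1)) :
    ∃ g : ℕ, 1 ≤ g ∧ (g:ℝ) - 1 + aa g < u ∧ u < (g:ℝ) + aa (g+1) := by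
  have hfl0 : (0:ℤ) ≤ ⌊u⌋ := Int.floor_nonneg.mpr hu.le
  set G : ℕ := (⌊u⌋).toNat with hG
  have hGR : (G:ℝ) = (⌊u⌋ : ℝ) := by
    rw [hG]; exact_mod_cast Int.toNat_of_nonneg hfl0
  have hsplit : u = G + Int.fract u := by
    rw [hGR]
    have := Int.self_sub_floor u
    linarith
  have hfr0 : 0 ≤ Int.fract u := Int.fract_nonneg u
  have hfr1 : Int.fract u < 1 := Int.fract_lt_one u
  rcases lt_or_gt_of_ne hnb with hlt | hgt
  · -- g := G
    have hG1 : 1 ≤ G := by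
      by_contra hG0
      have hQ : G = 0 := by omega
      rw [hQ] at hlt
      have : aa 1 = 0 := by rw [aa]; norm_num
      rw [this] at hlt
      linarith
    refine ⟨G, hG1, ?_, ?_⟩
    · have := aa_lt_one G hG1
      linarith
    · linarith
  · refine ⟨G+1, by omega, ?_, ?_⟩
    · push_cast
      linarith
    · have := aa_nonneg (G+2) (by omega)
      push_cast
      linarith

lemma Vexp (ρ d : ℝ) (hρ : ρ ≠ 0) (hd : 0 < d) (n k : ℕ) :
    (3:ℝ) ^ (k+1) * (ρ^(2*n) * d)
      = Real.exp (lam3 * (((k:ℝ)+1) + Real.log d / lam3 - (n:ℝ) * (-Real.log (ρ^2) / lam3))) := by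
  have hl := hlam3
  have hr0 : (0:ℝ) < ρ^2 := by positivity
  have hsplit : lam3 * (((k:ℝ)+1) + Real.log d / lam3 - (n:ℝ) * (-Real.log (ρ^2) / lam3))
      = ((k:ℝ)+1) * lam3 + Real.log d + (n:ℝ) * Real.log (ρ^2) := by
    field_simp
    ring
  rw [hsplit, Real.exp_add, Real.exp_add]
  have e1 : Real.exp (((k:ℝ)+1) * lam3) = 3^(k+1) := by
    rw [show ((k:ℝ)+1) = ((k+1 : ℕ) : ℝ) by push_cast; ring, Real.exp_nat_mul, exp_one]
  have e2 : Real.exp (Real.log d) = d := Real.exp_log hd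
  have e3 : Real.exp ((n:ℝ) * Real.log (ρ^2)) = ρ^(2*n) := by
    rw [Real.exp_nat_mul, Real.exp_log hr0, ← pow_mul]
  rw [e1, e2, e3]
  ring

end CantorAux3

open CantorAux3 in
theorem stmt_3 (c d ρ : ℝ) (hc : c ∈ cantorC) (hd : 0 < d)
    (hρ0 : 0 < |ρ|) (hρ1 : |ρ| < 1)
    (hmem : ∀ n : ℕ, c + ρ ^ (2 * n) * d ∈ cantorC) :
    ∃ q : ℚ, (q : ℝ) = Real.log |ρ| / Real.log 3 := by
  by_contra hq
  push_neg at hq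
  have hρne : ρ ≠ 0 := by
    intro h; rw [h] at hρ0; simp at hρ0
  have hth : Irrational (Real.log |ρ| / lam3) := by
    rintro ⟨x, hx⟩
    exact hq x hx
  set A : ℝ := -Real.log (ρ^2) / lam3 with hA
  have hlogr : Real.log (ρ^2) = 2 * Real.log |ρ| := by
    rw [← sq_abs, Real.log_pow]
    push_cast; ring
  have hr0 : (0:ℝ) < ρ^2 := by positivity
  have hr1 : ρ^2 < 1 := by
    rw [← sq_abs]
    nlinarith
  have hA0 : 0 < A := by
    rw [hA]
    apply div_pos _ hlam3
    have := Real.log_neg hr0 hr1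
    linarith
  have hAirr : Irrational A := by
    have h2 : A = ((-2 : ℚ) : ℝ) * (Real.log |ρ| / lam3) := by
      rw [hA, hlogr]
      push_cast
      ring
    rw [h2]
    exact hth.ratCast_mul (by norm_num)
  set B : ℝ := Real.log d / lam3 with hB
  -- choose p
  obtain ⟨p, hp1, hpnb⟩ := choose_p hA0 hAirr
  set u : ℝ := (p:ℝ) * A with hu
  have hu0 : 0 < u := by
    rw [hu]
    apply mul_pos _ hA0
    exact_mod_cast hp1
  have huirr : Irrational u := hAirr.natCast_mul (by omega)
  obtain ⟨g, hg1, hga, hgb⟩ := findg hu0 huirr hpnb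
  -- the target interval for φ
  set lo : ℝ := max (aa g) (u - g) with hlo
  set hi : ℝ := min (aa (g+1)) (u - g + 1) with hhi
  have hlo0 : 0 ≤ lo := le_trans (aa_nonneg g hg1) (le_max_left _ _)
  have hhi1 : hi ≤ 1 := by
    rw [hhi]
    calc min (aa (g+1)) (u - g + 1) ≤ aa (g+1) := min_le_left _ _
    _ ≤ 1 := (aa_lt_one (g+1) (by omega)).le
  have hlohi : lo < hi := by
    rw [hlo, hhi]
    apply max_lt <;> apply lt_min
    · exact aa_mono g hg1
    · linarith
    · linarith
    · linarith
  -- choose N with N*A > B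
  obtain ⟨N, hN⟩ := exists_nat_gt (B / A)
  have hNA : B < (N:ℝ) * A := by
    rw [div_lt_iff₀ hA0] at hN
    linarith
  -- density
  obtain ⟨n, hnN, hf1, hf2⟩ := fract_dense A B hAirr
    (show (0:ℝ) ≤ 1 - hi by linarith) (show 1 - lo ≤ 1 by linarith)
    (by linarith) N
  set z : ℝ := (n:ℝ) * A - B with hz
  have hz0 : 0 < z := by
    rw [hz]
    have : (N:ℝ) ≤ (n:ℝ) := by exact_mod_cast hnN
    nlinarith
  have hfl0 : (0:ℤ) ≤ ⌊z⌋ := Int.floor_nonneg.mpr hz0.le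
  set k : ℕ := (⌊z⌋).toNat with hk
  have hkR : (k:ℝ) = (⌊z⌋ : ℝ) := by
    rw [hk]; exact_mod_cast Int.toNat_of_nonneg hfl0
  set φ : ℝ := ((k:ℝ)+1) + B - (n:ℝ)*A with hφ
  have hφval : φ = 1 - Int.fract z := by
    rw [hφ]
    have hfr : Int.fract z = z - ⌊z⌋ := (Int.self_sub_floor z).symm
    rw [hfr, hkR, hz]
    ring
  have hφ1 : aa g < φ := by
    rw [hφval]
    have : Int.fract z < 1 - lo := hf2
    have h2 : aa g ≤ lo := le_max_left _ _
    linarith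
  have hφ2 : φ < aa (g+1) := by
    rw [hφval]
    have h2 : hi ≤ aa (g+1) := min_le_left _ _
    linarith [hf1]
  have hφ3 : u - g < φ := by
    rw [hφval]
    have h2 : u - g ≤ lo := le_max_right _ _
    linarith [hf2]
  have hφ4 : φ < u - g + 1 := by
    rw [hφval]
    have h2 : hi ≤ u - g + 1 := min_le_right _ _
    linarith [hf1]
  -- digits
  obtain ⟨a, ha, hca⟩ := hc
  obtain ⟨b1, hb1, he1⟩ := hmem n
  obtain ⟨b2, hb2, he2⟩ := hmem (n + p)
  rw [hca] at he1 he2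
  -- key quantities
  have hV : (3:ℝ)^(k+1) * (ρ^(2*n) * d) = Real.exp (lam3 * φ) := by
    rw [Vexp ρ d hρne hd n k, hφ, hA, hB]
  have hV' : (3:ℝ)^((k+g)+1) * (ρ^(2*(n+p)) * d) = Real.exp (lam3 * (φ + g - u)) := by
    rw [Vexp ρ d hρne hd (n+p) (k+g)]
    congr 1
    rw [hφ, hu, hA, hB]
    push_cast
    ring
  have hexpg : Real.exp (lam3 * aa g) = 2 - 3/3^g := exp_lam3_aa g hg1
  have hexpg1 : Real.exp (lam3 * aa (g+1)) = 2 - 3/3^(g+1) := exp_lam3_aa (g+1) (by omega)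
  -- bounds on V
  have hVlb : 2 - 3/3^g < (3:ℝ)^(k+1) * (ρ^(2*n) * d) := by
    rw [hV, ← hexpg]
    apply Real.exp_lt_exp.mpr
    exact (mul_lt_mul_iff_right₀ hlam3).mpr hφ1
  have hVub : (3:ℝ)^(k+1) * (ρ^(2*n) * d) < 2 - 3/3^(g+1) := by
    rw [hV, ← hexpg1]
    apply Real.exp_lt_exp.mpr
    exact (mul_lt_mul_iff_right₀ hlam3).mpr hφ2
  have h1 : 1 < (3:ℝ)^(k+1) * (ρ^(2*n) * d) := by
    rw [hV]
    calc (1:ℝ) = Real.exp 0 := Real.exp_zero.symm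
    _ < Real.exp (lam3 * φ) := by
        apply Real.exp_lt_exp.mpr
        have h0 : 0 ≤ aa g := aa_nonneg g hg1
        exact mul_pos hlam3 (by linarith)
  have h2 : (3:ℝ)^(k+1) * (ρ^(2*n) * d) < 2 := by
    have : (0:ℝ) < 3/3^(g+1) := by positivity
    linarith
  -- bounds on W = 3^(k+g+1) (2/3^(k+1) - δ)
  have hWeq : (3:ℝ)^((k+g)+1) * (2 / 3^(k+1) - ρ^(2*n) * d)
      = 3^g * (2 - (3:ℝ)^(k+1) * (ρ^(2*n) * d)) := by
    have hp3 : (0:ℝ) < 3^(k+1) := by positivity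
    have hpow : (3:ℝ)^((k+g)+1) = 3^g * 3^(k+1) := by
      rw [← pow_add]
      congr 1
      omega
    have hc : (3:ℝ)^(k+1) * (2/3^(k+1)) = 2 := by field_simp
    calc (3:ℝ)^((k+g)+1) * (2 / 3^(k+1) - ρ^(2*n) * d)
        = 3^g * ((3:ℝ)^(k+1) * (2/3^(k+1))) - 3^g * ((3:ℝ)^(k+1) * (ρ^(2*n) * d)) := by
          rw [hpow]; ring
    _ = 3^g * (2 - (3:ℝ)^(k+1) * (ρ^(2*n) * d)) := by rw [hc]; ring
  have hg3 : (3:ℝ)^g * (3/3^(g+1)) = 1 := by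
    rw [pow_succ]
    have : (0:ℝ) < 3^g := by positivity
    field_simp
  have h1' : 1 < (3:ℝ)^((k+g)+1) * (2 / 3^(k+1) - ρ^(2*n) * d) := by
    rw [hWeq]
    have hgp : (0:ℝ) < 3^g := by positivity
    have hstep : (3:ℝ)^g * (3/3^(g+1)) < 3^g * (2 - (3:ℝ)^(k+1) * (ρ^(2*n) * d)) := by
      apply mul_lt_mul_of_pos_left _ hgp
      linarith
    linarith [hg3]
  have h3' : (3:ℝ)^((k+g)+1) * (2 / 3^(k+1) - ρ^(2*n) * d) < 3 := by
    rw [hWeq]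
    have hgp : (0:ℝ) < 3^g := by positivity
    have hg3' : (3:ℝ)^g * (3/3^g) = 3 := by
      field_simp
    have hstep : (3:ℝ)^g * (2 - (3:ℝ)^(k+1) * (ρ^(2*n) * d)) < 3^g * (3/3^g) := by
      apply mul_lt_mul_of_pos_left _ hgp
      linarith
    linarith [hg3']
  -- bounds on V'
  have h1'' : 1 < (3:ℝ)^((k+g)+1) * (ρ^(2*(n+p)) * d) := by
    rw [hV']
    calc (1:ℝ) = Real.exp 0 := Real.exp_zero.symm
    _ < _ := by
        apply Real.exp_lt_exp.mpr
        exact mul_pos hlam3 (by linarith)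
  have h3'' : (3:ℝ)^((k+g)+1) * (ρ^(2*(n+p)) * d) < 3 := by
    rw [hV', ← exp_one]
    apply Real.exp_lt_exp.mpr
    have := mul_pos hlam3 (show 0 < 1 - (φ + g - u) by linarith)
    linarith
  -- contradiction
  have hA2 : a (k+g) = 0 :=
    keyA a b2 ha hb2 _ he2 (k+g) h1'' h3''
  have hB2 : a (k+g) = 2 :=
    keyB a b1 ha hb1 _ he1 k (k+g) h1 h2 h1' h3'
  rw [hA2] at hB2
  norm_num at hB2
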